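/- arXiv:2407.03337 — 2 statements merged into one kernel-verified Lean document; each statement's English description precedes it below -/
import Mathlib

section
/- Under the same hypotheses, the AT iteration sequence satisfies ‖s_{m+1} − s‖ ≤ ζ³‖s_m − s‖ for all m, and consequently ‖s_m − s‖ ≤ ζ^{3m}‖s_0 − s‖. -/
/-! A weak contraction `R` with fixed point `s` satisfies `‖R q - s‖ ≤ ζ ‖q - s‖` on `P` (the
`L`-term vanishes at `p = s`). Convex combinations of points within distance `r` of `s` stay within
distance `r` of `s`, since closed balls are convex, so the Mann steps `(1 - a) x + a R x` never move
away from `s`. Each AT step therefore gains `ζ²` from the two copies of `R ∘ R` averaged in `b_m`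
and one more `ζ` from the final application of `R`. -/

open Metric

noncomputable section

variable {E : Type*} [NormedAddCommGroup E] {P : Set E} {R : E → E} {s : E} {ζ : ℝ}

lemma norm_apply_sub_fixedPoint_le {L : ℝ}
    (hweak : ∀ p q, p ∈ P → q ∈ P → ‖R p - R q‖ ≤ ζ * ‖p - q‖ + L * ‖p - R p‖)
    (hsP : s ∈ P) (hfix : R s = s) {q : E} (hq : q ∈ P) : ‖R q - s‖ ≤ ζ * ‖q - s‖ := by
  simpa [hfix, norm_sub_rev] using hweak s q hsP hq

lemma norm_apply_apply_sub_le (hζ0 : 0 ≤ ζ) (hmap : Set.MapsTo R P P)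
    (hR : ∀ q ∈ P, ‖R q - s‖ ≤ ζ * ‖q - s‖) {x : E} (hx : x ∈ P) {r : ℝ}
    (hxr : ‖x - s‖ ≤ r) : ‖R (R x) - s‖ ≤ ζ ^ 2 * r :=
  calc ‖R (R x) - s‖ ≤ ζ * ‖R x - s‖ := hR _ (hmap hx)
    _ ≤ ζ * (ζ * r) := by gcongr; exact (hR x hx).trans (by gcongr)
    _ = ζ ^ 2 * r := by ring

variable [NormedSpace ℝ E]

def mannStep (R : E → E) (c : ℝ) (x : E) : E := (1 - c) • x + c • R x

def atMidpoint (R : E → E) (c : ℝ) (x : E) : E :=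
  (1 / 2 : ℝ) • R (R x) + (1 / 2 : ℝ) • R (R (mannStep R c x))

def atStep (R : E → E) (c : ℝ) (x : E) : E := R (mannStep R c (atMidpoint R c x))

lemma norm_lineComb_sub_le {c r : ℝ} (hc0 : 0 ≤ c) (hc1 : c ≤ 1) {x y : E}
    (hx : ‖x - s‖ ≤ r) (hy : ‖y - s‖ ≤ r) : ‖(1 - c) • x + c • y - s‖ ≤ r := by
  rw [← dist_eq_norm, ← mem_closedBall] at hx hy ⊢
  exact convex_closedBall s r hx hy (by linarith) hc0 (by ring)

lemma mannStep_mem (hPconv : Convex ℝ P) (hmap : Set.MapsTo R P P) {c : ℝ} (hc0 : 0 ≤ c)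
    (hc1 : c ≤ 1) {x : E} (hx : x ∈ P) : mannStep R c x ∈ P :=
  hPconv hx (hmap hx) (by linarith) hc0 (by ring)

lemma norm_mannStep_sub_le (hζ1 : ζ ≤ 1) (hR : ∀ q ∈ P, ‖R q - s‖ ≤ ζ * ‖q - s‖) {c : ℝ}
    (hc0 : 0 ≤ c) (hc1 : c ≤ 1) {x : E} (hx : x ∈ P) : ‖mannStep R c x - s‖ ≤ ‖x - s‖ := by
  have hRx : ‖R x - s‖ ≤ ‖x - s‖ :=
    (hR x hx).trans (mul_le_of_le_one_left (norm_nonneg _) hζ1)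
  exact norm_lineComb_sub_le hc0 hc1 le_rfl hRx

lemma atMidpoint_mem (hPconv : Convex ℝ P) (hmap : Set.MapsTo R P P) {c : ℝ} (hc0 : 0 ≤ c)
    (hc1 : c ≤ 1) {x : E} (hx : x ∈ P) : atMidpoint R c x ∈ P :=
  hPconv (hmap (hmap hx)) (hmap (hmap (mannStep_mem hPconv hmap hc0 hc1 hx)))
    (by norm_num) (by norm_num) (by norm_num)

lemma norm_atMidpoint_sub_le (hζ0 : 0 ≤ ζ) (hζ1 : ζ ≤ 1) (hPconv : Convex ℝ P)
    (hmap : Set.MapsTo R P P) (hR : ∀ q ∈ P, ‖R q - s‖ ≤ ζ * ‖q - s‖) {c : ℝ} (hc0 : 0 ≤ c)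
    (hc1 : c ≤ 1) {x : E} (hx : x ∈ P) : ‖atMidpoint R c x - s‖ ≤ ζ ^ 2 * ‖x - s‖ := by
  have h := norm_lineComb_sub_le (c := 1 / 2) (by norm_num) (by norm_num)
    (norm_apply_apply_sub_le hζ0 hmap hR hx le_rfl)
    (norm_apply_apply_sub_le hζ0 hmap hR (mannStep_mem hPconv hmap hc0 hc1 hx)
      (norm_mannStep_sub_le hζ1 hR hc0 hc1 hx))
  rw [atMidpoint]
  convert h using 4; norm_num

lemma atStep_mem (hPconv : Convex ℝ P) (hmap : Set.MapsTo R P P) {c : ℝ} (hc0 : 0 ≤ c)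
    (hc1 : c ≤ 1) {x : E} (hx : x ∈ P) : atStep R c x ∈ P :=
  hmap (mannStep_mem hPconv hmap hc0 hc1 (atMidpoint_mem hPconv hmap hc0 hc1 hx))

lemma norm_atStep_sub_le (hζ0 : 0 ≤ ζ) (hζ1 : ζ ≤ 1) (hPconv : Convex ℝ P)
    (hmap : Set.MapsTo R P P) (hR : ∀ q ∈ P, ‖R q - s‖ ≤ ζ * ‖q - s‖) {c : ℝ} (hc0 : 0 ≤ c)
    (hc1 : c ≤ 1) {x : E} (hx : x ∈ P) : ‖atStep R c x - s‖ ≤ ζ ^ 3 * ‖x - s‖ := by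
  have hbP := atMidpoint_mem hPconv hmap hc0 hc1 hx
  calc ‖atStep R c x - s‖ ≤ ζ * ‖mannStep R c (atMidpoint R c x) - s‖ :=
        hR _ (mannStep_mem hPconv hmap hc0 hc1 hbP)
    _ ≤ ζ * ‖atMidpoint R c x - s‖ := by gcongr; exact norm_mannStep_sub_le hζ1 hR hc0 hc1 hbP
    _ ≤ ζ * (ζ ^ 2 * ‖x - s‖) := by
        gcongr; exact norm_atMidpoint_sub_le hζ0 hζ1 hPconv hmap hR hc0 hc1 hx
    _ = ζ ^ 3 * ‖x - s‖ := by ring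

end

theorem AT_iteration_main_estimate_general
    {Q : Type*} [NormedAddCommGroup Q] [NormedSpace ℝ Q]
    (P : Set Q) (hPconv : Convex ℝ P)
    (R : Q → Q) (hmap : Set.MapsTo R P P)
    (ζ L : ℝ) (hζ0 : 0 < ζ) (hζ1 : ζ < 1)
    (hweak : ∀ p q, p ∈ P → q ∈ P → ‖R p - R q‖ ≤ ζ * ‖p - q‖ + L * ‖p - R p‖)
    (s : Q) (hsP : s ∈ P) (hfix : R s = s)
    (a : ℕ → ℝ) (ha : ∀ m, a m ∈ Set.Ioo (0 : ℝ) 1)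
    (s_ b_ : ℕ → Q) (hs0 : s_ 0 ∈ P)
    (hb : ∀ m, b_ m = (1/2 : ℝ) • R (R (s_ m)) +
      (1/2 : ℝ) • R (R ((1 - a m) • s_ m + (a m) • R (s_ m))))
    (hs : ∀ m, s_ (m + 1) = R ((1 - a m) • b_ m + (a m) • R (b_ m))) :
    (∀ m, ‖s_ (m + 1) - s‖ ≤ ζ ^ 3 * ‖s_ m - s‖) ∧
    (∀ m, ‖s_ m - s‖ ≤ ζ ^ (3 * m) * ‖s_ 0 - s‖) := by
  have hR := fun q => norm_apply_sub_fixedPoint_le (q := q) hweak hsP hfix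
  have ha0 m : 0 ≤ a m := (ha m).1.le
  have ha1 m : a m ≤ 1 := (ha m).2.le
  have hstep m : s_ (m + 1) = atStep R (a m) (s_ m) := by
    rw [hs, hb]; rfl
  have hmem m : s_ m ∈ P := by
    induction m with
    | zero => exact hs0
    | succ m ih => rw [hstep]; exact atStep_mem hPconv hmap (ha0 m) (ha1 m) ih
  have hcontr m : ‖s_ (m + 1) - s‖ ≤ ζ ^ 3 * ‖s_ m - s‖ := by
    rw [hstep]; exact norm_atStep_sub_le hζ0.le hζ1.le hPconv hmap hR (ha0 m) (ha1 m) (hmem m)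
  refine ⟨hcontr, fun m => ?_⟩
  rw [pow_mul]
  exact le_geom (u := fun m => ‖s_ m - s‖) (by positivity) m fun k _ => hcontr k

theorem AT_iteration_main_estimate
    {Q : Type*} [NormedAddCommGroup Q] [NormedSpace ℝ Q] [CompleteSpace Q]
    (P : Set Q) (hP : P.Nonempty) (hPc : IsClosed P) (hPconv : Convex ℝ P)
    (R : Q → Q) (hmap : Set.MapsTo R P P)
    (ζ L : ℝ) (hζ0 : 0 < ζ) (hζ1 : ζ < 1) (hL : 0 ≤ L)
    (hweak : ∀ p q, p ∈ P → q ∈ P → ‖R p - R q‖ ≤ ζ * ‖p - q‖ + L * ‖p - R p‖)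
    (s : Q) (hsP : s ∈ P) (hfix : R s = s)
    (a : ℕ → ℝ) (ha : ∀ m, a m ∈ Set.Ioo (0 : ℝ) 1)
    (s_ b_ : ℕ → Q) (hs0 : s_ 0 ∈ P)
    (hb : ∀ m, b_ m = (1/2 : ℝ) • R (R (s_ m)) +
      (1/2 : ℝ) • R (R ((1 - a m) • s_ m + (a m) • R (s_ m))))
    (hs : ∀ m, s_ (m + 1) = R ((1 - a m) • b_ m + (a m) • R (b_ m))) :
    (∀ m, ‖s_ (m + 1) - s‖ ≤ ζ ^ 3 * ‖s_ m - s‖) ∧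
    (∀ m, ‖s_ m - s‖ ≤ ζ ^ (3 * m) * ‖s_ 0 - s‖) :=
  AT_iteration_main_estimate_general P hPconv R hmap ζ L hζ0 hζ1 hweak s hsP hfix a ha s_ b_ hs0 hb
    hs
end

section
/- Let {p_m} be a sequence of nonnegative reals such that p_{m+1} ≤ (1 − δ_m)p_m + δ_m q_m for all m ≥ N, where δ_m ∈ (0,1), ∑ δ_m = ∞, and q_m ≥ 0 is bounded. Then limsup_{m→∞} p_m ≤ limsup_{m→∞} q_m. -/
/-!
Take any `a > limsup q`. Eventually `q m ≤ a`, so the excess `u m = max (p m - a) 0` obeys the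
homogeneous recursion `u (m + 1) ≤ (1 - δ m) * u m`. Since `1 - δ ≤ exp (-δ)`, this gives
`u n ≤ u M * exp (-(δ M + ⋯ + δ (n - 1)))`, which tends to `0` because `∑ δ` diverges.
Hence `limsup p ≤ a`.
-/

open Filter Finset Real Topology

theorem tendsto_nhds_zero_of_le_one_sub_mul {u δ : ℕ → ℝ} (hu : ∀ m, 0 ≤ u m)
    (hdiv : Tendsto (fun n => ∑ i ∈ range n, δ i) atTop atTop)
    (hrec : ∀ᶠ m in atTop, u (m + 1) ≤ (1 - δ m) * u m) :
    Tendsto u atTop (𝓝 0) := by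
  obtain ⟨M, hM⟩ := eventually_atTop.mp hrec
  set S := fun n => ∑ i ∈ range n, δ i
  have hbound : ∀ n, M ≤ n → u n ≤ u M * exp (S M - S n) := by
    intro n hn
    induction n, hn using Nat.le_induction with
    | base => simp
    | succ n hn ih =>
      calc u (n + 1) ≤ (1 - δ n) * u n := hM n hn
        _ ≤ exp (-δ n) * u n :=
          mul_le_mul_of_nonneg_right (by linarith [add_one_le_exp (-δ n)]) (hu n)
        _ ≤ exp (-δ n) * (u M * exp (S M - S n)) := by gcongr
        _ = u M * exp (S M - S (n + 1)) := by
          rw [show S (n + 1) = S n + δ n from sum_range_succ _ _, mul_left_comm, ← exp_add]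
          ring_nf
  have hlim : Tendsto (fun n => u M * exp (S M - S n)) atTop (𝓝 0) := by
    simpa [sub_eq_add_neg] using (tendsto_exp_atBot.comp
      (tendsto_atBot_add_const_left _ (S M) (tendsto_neg_atTop_atBot.comp hdiv))).const_mul (u M)
  exact squeeze_zero' (Eventually.of_forall hu) (eventually_atTop.mpr ⟨M, hbound⟩) hlim

theorem max_sub_le_one_sub_mul_max_sub {x y d c a : ℝ} (hd₀ : 0 ≤ d) (hd₁ : d ≤ 1)
    (hc : c ≤ a) (h : y ≤ (1 - d) * x + d * c) :
    max (y - a) 0 ≤ (1 - d) * max (x - a) 0 := by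
  refine max_le ?_ (mul_nonneg (by linarith) (le_max_right _ _))
  nlinarith [le_max_left (x - a) 0]

theorem limsup_le_of_le_one_sub_mul_add_mul {p q δ : ℕ → ℝ} {a : ℝ}
    (hp : IsBoundedUnder (· ≥ ·) atTop p) (hδ : ∀ m, δ m ∈ Set.Icc (0 : ℝ) 1)
    (hdiv : Tendsto (fun n => ∑ i ∈ range n, δ i) atTop atTop)
    (hrec : ∀ᶠ m in atTop, p (m + 1) ≤ (1 - δ m) * p m + δ m * q m)
    (hqa : ∀ᶠ m in atTop, q m ≤ a) :
    limsup p atTop ≤ a := by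
  have hu : Tendsto (fun m => max (p m - a) 0) atTop (𝓝 0) := by
    refine tendsto_nhds_zero_of_le_one_sub_mul (fun m => le_max_right _ _) hdiv ?_
    filter_upwards [hrec, hqa] with m hm hqm
    exact max_sub_le_one_sub_mul_max_sub (hδ m).1 (hδ m).2 hqm hm
  have hlim : Tendsto (fun m => a + max (p m - a) 0) atTop (𝓝 a) := by
    simpa using tendsto_const_nhds.add hu
  calc limsup p atTop ≤ limsup (fun m => a + max (p m - a) 0) atTop :=
        limsup_le_limsup (Eventually.of_forall fun m => by linarith [le_max_left (p m - a) 0])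
          hp.isCoboundedUnder_le hlim.isBoundedUnder_le
    _ = a := hlim.limsup_eq

theorem lemma_limsup_estimate_general
    (p q δ : ℕ → ℝ) (N : ℕ)
    (hp : ∀ m, 0 ≤ p m)
    (hδ : ∀ m, δ m ∈ Set.Ioo (0 : ℝ) 1)
    (hdiv : Filter.Tendsto (fun n => ∑ i ∈ Finset.range n, δ i) Filter.atTop Filter.atTop)
    (hqbdd : ∃ C, ∀ m, q m ≤ C)
    (hrec : ∀ m, N ≤ m → p (m + 1) ≤ (1 - δ m) * p m + δ m * q m) :
    Filter.limsup p Filter.atTop ≤ Filter.limsup q Filter.atTop := by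
  obtain ⟨C, hC⟩ := hqbdd
  refine le_of_forall_gt_imp_ge_of_dense fun a ha => ?_
  have hqa : ∀ᶠ m in atTop, q m ≤ a :=
    (eventually_lt_of_limsup_lt ha (isBoundedUnder_of ⟨C, hC⟩)).mono fun _ => le_of_lt
  exact limsup_le_of_le_one_sub_mul_add_mul (isBoundedUnder_of ⟨0, hp⟩)
    (fun m => Set.Ioo_subset_Icc_self (hδ m)) hdiv (eventually_atTop.mpr ⟨N, hrec⟩) hqa

theorem lemma_limsup_estimate
    (p q δ : ℕ → ℝ) (N : ℕ)
    (hp : ∀ m, 0 ≤ p m) (hq : ∀ m, 0 ≤ q m)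
    (hδ : ∀ m, δ m ∈ Set.Ioo (0 : ℝ) 1)
    (hdiv : Filter.Tendsto (fun n => ∑ i ∈ Finset.range n, δ i) Filter.atTop Filter.atTop)
    (hqbdd : ∃ C, ∀ m, q m ≤ C)
    (hrec : ∀ m, N ≤ m → p (m + 1) ≤ (1 - δ m) * p m + δ m * q m) :
    Filter.limsup p Filter.atTop ≤ Filter.limsup q Filter.atTop :=
  lemma_limsup_estimate_general p q δ N hp hδ hdiv hqbdd hrec
end
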